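/- arXiv:1501.03187 — 4 statements merged into one kernel-verified Lean document; each statement's English description precedes it below -/
import Mathlib

section
/- A measurable set Ω ⊂ ℝ^d multi-tiles ℝ^d at level ℓ by ℤ^d translations (i.e., Σ_{k∈ℤ^d} χ_Ω(ω−k) = ℓ for a.e. ω) if and only if, up to a set of measure zero, Ω is a disjoint union Ω = Ω_1 ∪ ⋯ ∪ Ω_ℓ where each Ω_j is measurable and tiles ℝ^d by ℤ^d translations at level 1. -/
/-!
Order `ℤ^d` lexicographically, a translation-invariant linear order. For `x` let its fibre be
`F(x) = {k | x - k ∈ Ω}`; then `F(x - k) = F(x) - k`. If almost every fibre has `ℓ` elements, let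
`Ω_j` consist of the `x ∈ Ω` with `|F(x)| = ℓ` and exactly `j` elements of `F(x)` below `0`. By
invariance, `x - k ∈ Ω_j` exactly when `k` is the `j`-th element of `F(x)`, so each `Ω_j` meets
almost every coset `x + ℤ^d` in exactly one point, and the `Ω_j` exhaust `Ω` up to the null set of
bad fibres. Conversely, the fibre of a disjoint union is the disjoint union of the fibres, and by
translation invariance of Lebesgue measure a null modification of `Ω` leaves almost every fibre
unchanged.
-/

open MeasureTheory

/-- `Ω` tiles `ℝ^d` by `ℤ^d`-translations at level `ℓ`:
`∑_{k ∈ ℤ^d} χ_Ω(ω - k) = ℓ` for a.e. `ω`. -/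
def MultiTiles (d : ℕ) (Ω : Set (Fin d → ℝ)) (ℓ : ℕ) : Prop :=
  ∀ᵐ ω ∂(volume : Measure (Fin d → ℝ)),
    (∑' k : Fin d → ℤ, Ω.indicator (fun _ => (1 : ℝ)) (ω - fun i => (k i : ℝ))) = ℓ

open Set Function
open scoped ENNReal

theorem Set.tsum_indicator_one_eq_toReal_encard {α : Type*} (S : Set α) :
    ∑' a, S.indicator (fun _ => (1 : ℝ)) a = (S.encard : ℝ≥0∞).toReal := by
  have h : ∀ a, S.indicator (fun _ => (1 : ℝ)) a = (S.indicator (fun _ => (1 : ℝ≥0∞)) a).toReal :=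
    fun a => by by_cases ha : a ∈ S <;> simp [ha]
  rw [tsum_congr h, ← ENNReal.tsum_toReal_eq fun a => by by_cases ha : a ∈ S <;> simp [ha],
    ← tsum_subtype, ENNReal.tsum_set_one]

theorem Set.tsum_indicator_one_eq_natCast_iff {α : Type*} {S : Set α} {n : ℕ} (hn : n ≠ 0) :
    ∑' a, S.indicator (fun _ => (1 : ℝ)) a = n ↔ S.encard = n := by
  rw [S.tsum_indicator_one_eq_toReal_encard]
  cases S.encard with
  | top => simp [eq_comm, hn]
  | coe m => simp

theorem Finset.existsUnique_card_filter_lt_eq {α : Type*} [LinearOrder α] (s : Finset α) {j : ℕ}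
    (hj : j < s.card) : ∃! a, a ∈ s ∧ (s.filter (· < a)).card = j := by
  set rank : α → ℕ := fun a => (s.filter (· < a)).card
  have hmono : StrictMonoOn rank s := fun a ha b _ hab => Finset.card_lt_card <|
    (Finset.ssubset_iff_of_subset fun x hx => by
      simp only [Finset.mem_filter] at hx ⊢; exact ⟨hx.1, hx.2.trans hab⟩).2
      ⟨a, Finset.mem_filter.2 ⟨ha, hab⟩, by simp⟩
  have hmaps : MapsTo rank s (Finset.range s.card) := fun a ha =>
    Finset.mem_range.2 <| Finset.card_lt_card <|
      (Finset.filter_ssubset (p := (· < a))).2 ⟨a, ha, lt_irrefl a⟩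
  obtain ⟨a, ha, rfl⟩ := Finset.surjOn_of_injOn_of_card_le rank hmaps hmono.injOn (by simp)
    (Finset.mem_range.2 hj)
  exact ⟨a, ⟨ha, rfl⟩, fun b hb => hmono.injOn hb.1 ha hb.2⟩

theorem Set.existsUnique_encard_inter_Iio_eq {α : Type*} [LinearOrder α] {S : Set α} {n : ℕ}
    (hS : S.encard = n) {j : ℕ} (hj : j < n) : ∃! a, a ∈ S ∧ (S ∩ Iio a).encard = j := by
  lift S to Finset α using finite_of_encard_eq_coe hS
  rw [encard_coe_eq_coe_finsetCard, Nat.cast_inj] at hS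
  subst hS
  have h : ∀ a, (S ∩ Iio a : Set α) = ↑(S.filter (· < a)) := fun a => by ext; simp
  simpa only [h, Finset.mem_coe, encard_coe_eq_coe_finsetCard, Nat.cast_inj] using
    S.existsUnique_card_filter_lt_eq hj

theorem Set.encard_inter_Iio_lt {α : Type*} [LinearOrder α] {S : Set α} {n : ℕ}
    (hS : S.encard = n) {a : α} (ha : a ∈ S) : (S ∩ Iio a).encard < n := by
  rw [← hS]
  exact ((finite_of_encard_eq_coe hS).subset inter_subset_left).encard_lt_encard
    ⟨inter_subset_left, fun h => lt_irrefl a (h ha).2⟩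

section LatticeFiber

variable {Λ E : Type*} [AddCommGroup Λ] [AddCommGroup E] (ι : Λ →+ E)

def latticeFiber (Ω : Set E) (x : E) : Set Λ := (fun k => x - ι k) ⁻¹' Ω

variable {ι}

theorem latticeFiber_sub (Ω : Set E) (x : E) (k : Λ) :
    latticeFiber ι Ω (x - ι k) = (k + ·) ⁻¹' latticeFiber ι Ω x := by
  ext m
  simp [latticeFiber, sub_sub]

theorem encard_latticeFiber_iUnion {J : Type*} [Finite J] {Ωs : J → Set E}
    (hΩs : Pairwise (Disjoint on Ωs)) (x : E) :
    (latticeFiber ι (⋃ j, Ωs j) x).encard = ∑ᶠ j, (latticeFiber ι (Ωs j) x).encard := by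
  rw [latticeFiber, preimage_iUnion]
  exact encard_iUnion_of_finite fun _ _ hij => (hΩs hij).preimage _

variable [LinearOrder Λ]

def rankTile (ι : Λ →+ E) (Ω : Set E) (ℓ j : ℕ) : Set E :=
  {x | x ∈ Ω ∧ (latticeFiber ι Ω x).encard = ℓ ∧ (latticeFiber ι Ω x ∩ Iio 0).encard = j}

theorem pairwise_disjoint_rankTile (Ω : Set E) (ℓ : ℕ) :
    Pairwise (Disjoint on rankTile ι Ω ℓ) := fun _ _ hjj' =>
  disjoint_left.2 fun _ hx hx' => hjj' (by exact_mod_cast hx.2.2.symm.trans hx'.2.2)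

theorem iUnion_rankTile (Ω : Set E) (ℓ : ℕ) :
    ⋃ j : Fin ℓ, rankTile ι Ω ℓ j = {x | x ∈ Ω ∧ (latticeFiber ι Ω x).encard = ℓ} := by
  ext x
  simp only [mem_iUnion, rankTile]
  refine ⟨fun ⟨_, hx, hℓ, _⟩ => ⟨hx, hℓ⟩, fun ⟨hx, hℓ⟩ => ?_⟩
  have h0 : (0 : Λ) ∈ latticeFiber ι Ω x := by simpa [latticeFiber] using hx
  obtain ⟨j, hj⟩ := ENat.ne_top_iff_exists.1 (encard_inter_Iio_lt hℓ h0).ne_top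
  exact ⟨⟨j, by exact_mod_cast hj ▸ encard_inter_Iio_lt hℓ h0⟩, hx, hℓ, hj.symm⟩

variable [IsOrderedAddMonoid Λ]

theorem sub_mem_rankTile_iff {Ω : Set E} {ℓ j : ℕ} {x : E} {k : Λ} :
    x - ι k ∈ rankTile ι Ω ℓ j ↔ k ∈ latticeFiber ι Ω x ∧ (latticeFiber ι Ω x).encard = ℓ ∧
      (latticeFiber ι Ω x ∩ Iio k).encard = j := by
  have hIio : (k + ·) ⁻¹' Iio k = Iio (0 : Λ) := by ext; simp
  simp only [rankTile, mem_ofPred, latticeFiber_sub, ← hIio, ← preimage_inter,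
    encard_preimage_of_bijective (AddGroup.addLeft_bijective k)]
  rfl

theorem encard_latticeFiber_rankTile {Ω : Set E} {ℓ j : ℕ} {x : E}
    (hx : (latticeFiber ι Ω x).encard = ℓ) (hj : j < ℓ) :
    (latticeFiber ι (rankTile ι Ω ℓ j) x).encard = 1 := by
  obtain ⟨a, ha, huniq⟩ := existsUnique_encard_inter_Iio_eq hx hj
  refine encard_eq_one.2 ⟨a, Set.ext fun k => ?_⟩
  rw [mem_singleton_iff, latticeFiber, mem_preimage, sub_mem_rankTile_iff]
  exact ⟨fun hk => huniq k ⟨hk.1, hk.2.2⟩, fun hk => hk ▸ ⟨ha.1, hx, ha.2⟩⟩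

end LatticeFiber

section Measure

variable {Λ E : Type*} [AddCommGroup Λ] [AddCommGroup E] [MeasurableSpace E] {ι : Λ →+ E}

theorem ae_eq_iUnion_rankTile [LinearOrder Λ] {μ : Measure E} {Ω : Set E} {ℓ : ℕ}
    (h : ∀ᵐ x ∂μ, (latticeFiber ι Ω x).encard = ℓ) :
    Ω =ᵐ[μ] ⋃ j : Fin ℓ, rankTile ι Ω ℓ j := by
  rw [iUnion_rankTile, ofPred_and, ofPred_mem_eq]
  exact (inter_ae_eq_left_of_ae_eq_univ (Filter.eventuallyEq_univ.2 h)).symm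

variable [Countable Λ]

theorem measurableSet_setOf_encard_latticeFiber_inter_eq [MeasurableSub E] {Ω : Set E}
    (hΩ : MeasurableSet Ω) (T : Set Λ) (n : ℕ∞) :
    MeasurableSet {x | (latticeFiber ι Ω x ∩ T).encard = n} := by
  have hcount : Measurable fun x => ((latticeFiber ι Ω x ∩ T).encard : ℝ≥0∞) := by
    simp_rw [← ENNReal.tsum_set_one, tsum_subtype _ fun _ => (1 : ℝ≥0∞)]
    refine Measurable.tsum fun k => measurable_const.indicator ?_
    exact (measurable_sub_const _ hΩ).inter (MeasurableSet.const (k ∈ T))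
  simpa only [preimage, mem_singleton_iff, ENat.toENNReal_inj] using
    hcount (measurableSet_singleton (n : ℝ≥0∞))

theorem measurableSet_rankTile [MeasurableSub E] [LinearOrder Λ] {Ω : Set E}
    (hΩ : MeasurableSet Ω) (ℓ j : ℕ) : MeasurableSet (rankTile ι Ω ℓ j) := by
  have hcard := measurableSet_setOf_encard_latticeFiber_inter_eq (ι := ι) hΩ univ ℓ
  simp only [inter_univ] at hcard
  exact hΩ.inter (hcard.inter (measurableSet_setOf_encard_latticeFiber_inter_eq hΩ (Iio 0) j))

theorem ae_latticeFiber_eq [MeasurableAdd E] {μ : Measure E} [μ.IsAddRightInvariant]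
    {Ω Ω' : Set E} (h : Ω =ᵐ[μ] Ω') :
    ∀ᵐ x ∂μ, latticeFiber ι Ω x = latticeFiber ι Ω' x := by
  have hk (k : Λ) : (· - ι k) ⁻¹' Ω =ᵐ[μ] (· - ι k) ⁻¹' Ω' :=
    (measurePreserving_sub_right μ (ι k)).quasiMeasurePreserving.preimage_ae_eq h
  filter_upwards [ae_all_iff.2 hk] with x hx
  exact Set.ext fun k => (hx k).to_iff

end Measure

instance Lex.countable {α : Type*} [Countable α] : Countable (Lex α) := ‹Countable α›

def intLatticeLex (d : ℕ) : Lex (Fin d → ℤ) →+ (Fin d → ℝ) where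
  toFun k i := (ofLex k i : ℝ)
  map_zero' := funext fun _ => Int.cast_zero
  map_add' _ _ := funext fun _ => Int.cast_add _ _

-- `Lex (Fin d → ℤ)` is `Fin d → ℤ` by definition, so the sum in `MultiTiles` is literally the sum
-- of the indicator of the fibre.
theorem multiTiles_iff_ae_encard_latticeFiber {d n : ℕ} (hn : n ≠ 0) (Ω : Set (Fin d → ℝ)) :
    MultiTiles d Ω n ↔ ∀ᵐ x, (latticeFiber (intLatticeLex d) Ω x).encard = n :=
  Filter.eventually_congr <| .of_forall fun x =>
    tsum_indicator_one_eq_natCast_iff (S := latticeFiber (intLatticeLex d) Ω x) hn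

/-- a measurable set `Ω ⊆ ℝ^d` multi-tiles at level `ℓ` iff, up to a null
set, `Ω` is a disjoint union of `ℓ` measurable sets each of which tiles at level `1`. -/
theorem stmt1 (d ℓ : ℕ) (hℓ : 0 < ℓ) (Ω : Set (Fin d → ℝ)) (hΩ : MeasurableSet Ω) :
    MultiTiles d Ω ℓ ↔
      ∃ Ωs : Fin ℓ → Set (Fin d → ℝ),
        (∀ j, MeasurableSet (Ωs j)) ∧
        Pairwise (Function.onFun Disjoint Ωs) ∧
        (∀ j, MultiTiles d (Ωs j) 1) ∧
        volume (symmDiff Ω (⋃ j, Ωs j)) = 0 := by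
  simp_rw [multiTiles_iff_ae_encard_latticeFiber hℓ.ne',
    multiTiles_iff_ae_encard_latticeFiber one_ne_zero, measure_symmDiff_eq_zero_iff]
  constructor
  · intro hΩℓ
    exact ⟨fun j => rankTile (intLatticeLex d) Ω ℓ j, fun j => measurableSet_rankTile hΩ ℓ j,
      (pairwise_disjoint_rankTile Ω ℓ).comp_of_injective Fin.val_injective,
      fun j => hΩℓ.mono fun x hx => encard_latticeFiber_rankTile hx j.2,
      ae_eq_iUnion_rankTile hΩℓ⟩
  · rintro ⟨Ωs, -, hdisj, htiles, hΩs⟩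
    filter_upwards [ae_latticeFiber_eq (ι := intLatticeLex d) hΩs, ae_all_iff.2 htiles]
      with x hx htx
    rw [hx, encard_latticeFiber_iUnion hdisj, finsum_eq_sum_of_fintype]
    simp [htx]
end

section
/- Let H be a Hilbert space, W ⊂ H a closed subspace, and a_1,…,a_m ∈ W. Let G be the m×m Gramian matrix G_{kl} = ⟨a_k, a_l⟩ with eigenvalues λ_1 ≥ ⋯ ≥ λ_m ≥ 0. Then for every subspace S ⊆ H with dim S ≤ ℓ, one has Σ_{j=1}^m ‖a_j − P_S a_j‖² ≥ Σ_{s=ℓ+1}^m λ_s, and equality is attained by the span of the vectors q_s = λ_s^{−1/2} Σ_{k=1}^m y_s(k) a_k for s with λ_s ≠ 0, where y_1,…,y_m are orthonormal eigenvectors of the conjugate-transposed Gramian corresponding to λ_1,…,λ_m. -/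
/-
Put `b s = ∑ k, y s k • a k`. The eigenvector equation for the Gramian makes the `b s` pairwise
orthogonal with `‖b s‖² = λ s`. As `y` is an orthonormal basis of `ℂᵐ` and `∑ ‖T e‖²` over an
orthonormal basis `e` does not depend on the basis, the residual `∑ j, ‖a j - P_S a j‖²` equals
`∑ s, ‖b s - P_S b s‖² = ∑ s, λ s (1 - ‖P_S q s‖²)`, with `q s` the normalised `b s`. By Bessel's
inequality `∑ s, ‖P_S q s‖² ≤ dim S ≤ ℓ`, and comparing every weight with the threshold `λ ℓ`
shows that the weights `‖P_S q s‖² ∈ [0, 1]` remove at most `λ 0 + ⋯ + λ (ℓ - 1)`.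
The span of `q 0, …, q (ℓ - 1)` contains `b s` for `s < ℓ` and is orthogonal to the other `b s`,
which gives equality.
-/

open InnerProductSpace Matrix

open Finset Module

theorem sum_filter_le_sum_mul_one_sub {m ℓ : ℕ} {lam u : Fin m → ℝ} (hlam : Antitone lam)
    (hlam0 : ∀ s, 0 ≤ lam s) (hu0 : ∀ s, 0 ≤ u s) (hu1 : ∀ s, u s ≤ 1) (hu : ∑ s, u s ≤ ℓ) :
    ∑ s ∈ univ.filter (fun s : Fin m => ℓ ≤ (s : ℕ)), lam s ≤ ∑ s, lam s * (1 - u s) := by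
  rcases lt_or_ge ℓ m with hℓ | hℓ
  · set c := lam ⟨ℓ, hℓ⟩
    have hpoint : ∀ s : Fin m, c * ((if (s : ℕ) < ℓ then 1 else 0) - u s)
        ≤ lam s * (1 - u s) - if ℓ ≤ (s : ℕ) then lam s else 0 := by
      intro s
      by_cases hs : (s : ℕ) < ℓ
      · have : c ≤ lam s := hlam (Fin.mk_le_of_le_val hs.le)
        simp only [hs, if_true, not_le.mpr hs, if_false, sub_zero]
        nlinarith [hu1 s]
      · have : lam s ≤ c := hlam (Fin.le_def.mpr (not_lt.mp hs))
        simp only [hs, if_false, not_lt.mp hs, if_true]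
        nlinarith [hu0 s]
    have hcard : ∑ s : Fin m, (if (s : ℕ) < ℓ then (1 : ℝ) else 0) = ℓ := by
      rw [Finset.sum_boole, Fin.card_filter_val_lt, min_eq_right hℓ.le]
    have hsum := Finset.sum_le_sum fun s (_ : s ∈ univ) => hpoint s
    rw [← Finset.mul_sum, Finset.sum_sub_distrib, hcard, Finset.sum_sub_distrib,
      ← Finset.sum_filter] at hsum
    linarith [mul_nonneg (hlam0 ⟨ℓ, hℓ⟩) (sub_nonneg.mpr hu)]
  · rw [Finset.filter_false_of_mem fun s _ => not_le.mpr (s.2.trans_le hℓ), Finset.sum_empty]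
    exact Finset.sum_nonneg fun s _ => mul_nonneg (hlam0 s) (sub_nonneg.mpr (hu1 s))

section

variable {𝕜 E : Type*} [RCLike 𝕜] [NormedAddCommGroup E] [InnerProductSpace 𝕜 E]

theorem Submodule.infDist_eq_norm_starProjection_orthogonal (K : Submodule 𝕜 E)
    [K.HasOrthogonalProjection] (x : E) :
    Metric.infDist x K = ‖Kᗮ.starProjection x‖ := by
  rw [Metric.infDist_eq_iInf, starProjection_orthogonal_val, starProjection_minimal]
  simp only [dist_eq_norm]
  rfl

theorem Submodule.infDist_eq_norm_of_mem_orthogonal (K : Submodule 𝕜 E)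
    [K.HasOrthogonalProjection] {x : E} (hx : x ∈ Kᗮ) : Metric.infDist x K = ‖x‖ := by
  rw [K.infDist_eq_norm_starProjection_orthogonal, Kᗮ.starProjection_eq_self_iff.mpr hx]

theorem OrthonormalBasis.sum_norm_sq_map_eq {ι κ F : Type*} [Fintype ι] [Fintype κ]
    [NormedAddCommGroup F] [InnerProductSpace 𝕜 F] (T : E →ₗ[𝕜] F)
    (e : OrthonormalBasis ι 𝕜 E) (f : OrthonormalBasis κ 𝕜 E) :
    ∑ i, ‖T (e i)‖ ^ 2 = ∑ j, ‖T (f j)‖ ^ 2 := by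
  suffices h : ∑ i, ⟪T (e i), T (e i)⟫_𝕜 = ∑ j, ⟪T (f j), T (f j)⟫_𝕜 by
    simp only [inner_self_eq_norm_sq_to_K] at h
    exact_mod_cast h
  calc ∑ i, ⟪T (e i), T (e i)⟫_𝕜
      = ∑ i, ⟪T (e i), T (∑ j, ⟪f j, e i⟫_𝕜 • f j)⟫_𝕜 := by simp only [f.sum_repr']
    _ = ∑ j, ∑ i, ⟪T (⟪e i, f j⟫_𝕜 • e i), T (f j)⟫_𝕜 := by
      rw [Finset.sum_comm]
      simp only [map_sum, map_smul, inner_sum, inner_smul_left, inner_smul_right,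
        inner_conj_symm]
    _ = ∑ j, ⟪T (f j), T (f j)⟫_𝕜 := by
      simp only [← sum_inner, ← map_sum, e.sum_repr']

theorem Orthonormal.sum_norm_sq_starProjection_le_finrank {ι : Type*} [Fintype ι] {v : ι → E}
    (hv : Orthonormal 𝕜 v) (S : Submodule 𝕜 E) [FiniteDimensional 𝕜 S] :
    ∑ i, ‖S.starProjection (v i)‖ ^ 2 ≤ finrank 𝕜 S := by
  let e := stdOrthonormalBasis 𝕜 S
  have hparseval : ∀ x, ‖S.starProjection x‖ ^ 2 = ∑ j, ‖⟪(e j : E), x⟫_𝕜‖ ^ 2 := fun x => by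
    rw [S.starProjection_apply, Submodule.norm_coe, ← e.sum_sq_norm_inner_right]
    simp only [Submodule.inner_orthogonalProjectionOnto_eq_of_mem_left]
  calc ∑ i, ‖S.starProjection (v i)‖ ^ 2
      = ∑ j, ∑ i, ‖⟪v i, (e j : E)⟫_𝕜‖ ^ 2 := by
        simp only [hparseval, norm_inner_symm]
        exact Finset.sum_comm
    _ ≤ ∑ j, ‖(e j : E)‖ ^ 2 := Finset.sum_le_sum fun j _ => hv.sum_inner_products_le _
    _ = finrank 𝕜 S := by
      simp only [Submodule.norm_coe, e.orthonormal.1, one_pow, sum_const, card_univ,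
        Fintype.card_fin, nsmul_eq_mul, mul_one]

theorem norm_smul_inv_norm_smul (x : E) : (‖x‖ : 𝕜) • (‖x‖⁻¹ : 𝕜) • x = x := by
  by_cases hx : x = 0
  · simp [hx]
  · simp [smul_smul, hx]

theorem orthonormal_inv_norm_smul_of_pairwise_inner_eq_zero {ι : Type*} {b : ι → E}
    (hb : Pairwise fun s t => ⟪b s, b t⟫_𝕜 = 0) :
    Orthonormal 𝕜 fun s : {s // b s ≠ 0} => (‖b s‖⁻¹ : 𝕜) • b s :=
  ⟨fun s => norm_smul_inv_norm s.2, fun s t hst => by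
    simp only [inner_smul_left, inner_smul_right, hb (Subtype.coe_injective.ne hst), mul_zero]⟩

theorem sum_infDist_sq_eq_of_orthonormal {ι : Type*} [Fintype ι] [DecidableEq ι] (a : ι → E)
    {y : ι → EuclideanSpace 𝕜 ι} (hy : Orthonormal 𝕜 y) (S : Submodule 𝕜 E)
    [S.HasOrthogonalProjection] :
    ∑ j, Metric.infDist (a j) S ^ 2 = ∑ s, Metric.infDist (∑ k, y s k • a k) S ^ 2 := by
  let Y : OrthonormalBasis ι 𝕜 (EuclideanSpace 𝕜 ι) := OrthonormalBasis.mk hy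
    (hy.linearIndependent.span_eq_top_of_card_eq_finrank' finrank_euclideanSpace.symm).ge
  let T : EuclideanSpace 𝕜 ι →ₗ[𝕜] E := (Sᗮ.starProjection : E →L[𝕜] E).toLinearMap ∘ₗ
    Fintype.linearCombination 𝕜 a ∘ₗ (WithLp.linearEquiv 2 𝕜 (ι → 𝕜)).toLinearMap
  have := (EuclideanSpace.basisFun ι 𝕜).sum_norm_sq_map_eq T Y
  simpa [S.infDist_eq_norm_starProjection_orthogonal, T, Y, Fintype.linearCombination_apply,
    Pi.single_apply] using this

theorem inner_sum_smul_eq_ite_of_gram_mulVec_eq {ι : Type*} [Fintype ι] [DecidableEq ι]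
    (a : ι → E) {y : ι → EuclideanSpace 𝕜 ι} (hy : Orthonormal 𝕜 y) {μ : ι → 𝕜}
    (heig : ∀ s, gram 𝕜 a *ᵥ y s = μ s • y s) (s t : ι) :
    ⟪∑ k, y s k • a k, ∑ k, y t k • a k⟫_𝕜 = if s = t then μ s else 0 := by
  rw [← star_dotProduct_gram_mulVec, heig, dotProduct_smul, dotProduct_comm,
    ← EuclideanSpace.inner_eq_star_dotProduct, orthonormal_iff_ite.mp hy]
  split_ifs with h
  · subst h; simp
  · simp

theorem sum_filter_norm_sq_le_sum_infDist_sq {m ℓ : ℕ} {b : Fin m → E}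
    (hb : Pairwise fun s t => ⟪b s, b t⟫_𝕜 = 0) (hanti : Antitone fun s => ‖b s‖ ^ 2)
    (S : Submodule 𝕜 E) [FiniteDimensional 𝕜 S] (hS : finrank 𝕜 S ≤ ℓ) :
    ∑ s ∈ univ.filter (fun s : Fin m => ℓ ≤ (s : ℕ)), ‖b s‖ ^ 2
      ≤ ∑ s, Metric.infDist (b s) S ^ 2 := by
  set u : Fin m → E := fun s => (‖b s‖⁻¹ : 𝕜) • b s
  have hbu : ∀ s, b s = (‖b s‖ : 𝕜) • u s := fun s => (norm_smul_inv_norm_smul (b s)).symm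
  have hdist : ∀ s, Metric.infDist (b s) S ^ 2
      = ‖b s‖ ^ 2 * (1 - ‖S.starProjection (u s)‖ ^ 2) := fun s => by
    have hPb : ‖S.starProjection (b s)‖ = ‖b s‖ * ‖S.starProjection (u s)‖ := by
      conv_lhs => rw [hbu s, map_smul, norm_smul, RCLike.norm_ofReal, abs_norm]
    rw [S.infDist_eq_norm_starProjection_orthogonal]
    linear_combination -S.norm_sq_eq_add_norm_sq_starProjection (b s) - congrArg (· ^ 2) hPb
  have hu1 : ∀ s, ‖S.starProjection (u s)‖ ^ 2 ≤ 1 := fun s => by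
    have hu : ‖u s‖ ≤ 1 := by
      by_cases h : b s = 0
      · simp [u, h]
      · exact (norm_smul_inv_norm h).le
    nlinarith [S.norm_starProjection_apply_le (u s), norm_nonneg (S.starProjection (u s))]
  have hsum : ∑ s, ‖S.starProjection (u s)‖ ^ 2 ≤ ℓ := by
    classical
    rw [← Fintype.sum_subtype_add_sum_subtype (fun s => b s ≠ 0)]
    have hzero : ∀ s : {s // ¬ b s ≠ 0}, ‖S.starProjection (u s)‖ ^ 2 = 0 := fun s => by
      simp [u, not_not.mp s.2]
    simp only [hzero, Finset.sum_const_zero, add_zero]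
    refine (Orthonormal.sum_norm_sq_starProjection_le_finrank ?_ S).trans (by exact_mod_cast hS)
    exact orthonormal_inv_norm_smul_of_pairwise_inner_eq_zero hb
  simp only [hdist]
  exact sum_filter_le_sum_mul_one_sub hanti (fun s => sq_nonneg _) (fun s => sq_nonneg _) hu1
    hsum

theorem sum_infDist_sq_span_inv_norm_smul_eq {m ℓ : ℕ} (hℓm : ℓ ≤ m) {b : Fin m → E}
    (hb : Pairwise fun s t => ⟪b s, b t⟫_𝕜 = 0) :
    ∑ s, Metric.infDist (b s) (Submodule.span 𝕜 (Set.range fun t : Fin ℓ =>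
        (‖b (Fin.castLE hℓm t)‖⁻¹ : 𝕜) • b (Fin.castLE hℓm t)) : Set E) ^ 2
      = ∑ s ∈ univ.filter (fun s : Fin m => ℓ ≤ (s : ℕ)), ‖b s‖ ^ 2 := by
  set K := Submodule.span 𝕜 (Set.range fun t : Fin ℓ =>
    (‖b (Fin.castLE hℓm t)‖⁻¹ : 𝕜) • b (Fin.castLE hℓm t))
  have : FiniteDimensional 𝕜 K := FiniteDimensional.span_of_finite 𝕜 (Set.finite_range _)
  have hbK : ∀ s : Fin m, (s : ℕ) < ℓ → b s ∈ K := fun s hs => by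
    rw [← norm_smul_inv_norm_smul (𝕜 := 𝕜) (b s)]
    exact K.smul_mem _ (Submodule.subset_span ⟨⟨s, hs⟩, rfl⟩)
  have hbKperp : ∀ s : Fin m, ℓ ≤ (s : ℕ) → b s ∈ Kᗮ := fun s hs => by
    refine Submodule.isOrtho_span.mpr ?_ (Submodule.mem_span_singleton_self (b s))
    rintro u rfl v ⟨t, rfl⟩
    have hst : s ≠ Fin.castLE hℓm t := Fin.ne_of_val_ne (by rw [Fin.val_castLE]; omega)
    simp only [inner_smul_right, hb hst, mul_zero]
  rw [Finset.sum_filter]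
  refine Finset.sum_congr rfl fun s _ => ?_
  split_ifs with hs
  · rw [K.infDist_eq_norm_of_mem_orthogonal (hbKperp s hs)]
  · rw [Metric.infDist_zero_of_mem (hbK s (not_le.mp hs)), zero_pow two_ne_zero]

end

theorem stmt6_general {H : Type*} [NormedAddCommGroup H] [InnerProductSpace ℂ H]
    (m ℓ : ℕ) (hℓm : ℓ ≤ m)
    (a : Fin m → H)
    (G : Matrix (Fin m) (Fin m) ℂ) (hG : ∀ k l, G k l = ⟪a k, a l⟫_ℂ)
    (lam : Fin m → ℝ) (hdec : Antitone lam)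
    (y : Fin m → EuclideanSpace ℂ (Fin m)) (hy : Orthonormal ℂ y)
    (heig : ∀ s, G.conjTranspose *ᵥ (y s) = (lam s : ℂ) • (y s))
    (q : Fin m → H)
    (hq : ∀ s, q s = if lam s = 0 then 0
        else ((Real.sqrt (lam s))⁻¹ : ℝ) • ∑ k, y s k • a k) :
    (∀ S : Submodule ℂ H, Module.rank ℂ S ≤ (ℓ : Cardinal) →
        ∑ s ∈ Finset.univ.filter (fun s : Fin m => ℓ ≤ (s : ℕ)), lam s
          ≤ ∑ j, (Metric.infDist (a j) (S : Set H)) ^ 2) ∧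
    ∑ j, (Metric.infDist (a j)
        ((Submodule.span ℂ (Set.range fun s : Fin ℓ => q (Fin.castLE hℓm s)) : Submodule ℂ H)
          : Set H)) ^ 2
      = ∑ s ∈ Finset.univ.filter (fun s : Fin m => ℓ ≤ (s : ℕ)), lam s := by
  have hgram : G = gram ℂ a := Matrix.ext fun k l => hG k l
  set b : Fin m → H := fun s => ∑ k, y s k • a k
  have hb : ∀ s t, ⟪b s, b t⟫_ℂ = if s = t then (lam s : ℂ) else 0 :=
    inner_sum_smul_eq_ite_of_gram_mulVec_eq a hy fun s => by
      rw [← (isHermitian_gram ℂ a).eq, ← hgram, heig]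
  have hnorm : ∀ s, ‖b s‖ ^ 2 = lam s := fun s => by
    simpa [← inner_self_eq_norm_sq (𝕜 := ℂ)] using congrArg RCLike.re (hb s s)
  have horth : Pairwise fun s t => ⟪b s, b t⟫_ℂ = 0 := fun s t h => (hb s t).trans (if_neg h)
  refine ⟨fun S hS => ?_, ?_⟩
  · have : FiniteDimensional ℂ S :=
      Module.rank_lt_aleph0_iff.mp (hS.trans_lt Cardinal.natCast_lt_aleph0)
    rw [sum_infDist_sq_eq_of_orthonormal a hy S]
    simpa only [hnorm] using sum_filter_norm_sq_le_sum_infDist_sq horth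
      (by simpa only [hnorm] using hdec) S (Module.finrank_le_of_rank_le hS)
  · have hq_eq : ∀ s, q s = (‖b s‖⁻¹ : ℂ) • b s := fun s => by
      rw [hq s, ← hnorm s, Real.sqrt_sq (norm_nonneg _)]
      split_ifs with h
      · simp [pow_eq_zero_iff two_ne_zero |>.mp h]
      · rw [← Complex.coe_smul, Complex.ofReal_inv]
    have := FiniteDimensional.span_of_finite ℂ
      (Set.finite_range fun s : Fin ℓ => q (Fin.castLE hℓm s))
    rw [sum_infDist_sq_eq_of_orthonormal a hy]
    simp only [hq_eq]
    exact (sum_infDist_sq_span_inv_norm_smul_eq hℓm horth).trans (by simp only [hnorm])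

/-- Eckart–Young in Hilbert space: with `G` the Gramian of `a_1,…,a_m ∈ W`,
eigenvalues `λ_1 ≥ ⋯ ≥ λ_m ≥ 0` and orthonormal eigenvectors `y_s` of the
conjugate-transposed Gramian, every subspace `S` with `dim S ≤ ℓ` satisfies
`∑_j ‖a_j − P_S a_j‖² ≥ ∑_{s=ℓ+1}^m λ_s`, and equality is attained by
`S* = span{q_1,…,q_ℓ}` where `q_s = λ_s^{-1/2} ∑_k y_s(k) a_k` (and `q_s = 0` if
`λ_s = 0`).  Here `‖a − P_S a‖` is written as the distance from `a` to `S`. -/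
theorem stmt6 {H : Type*} [NormedAddCommGroup H] [InnerProductSpace ℂ H] [CompleteSpace H]
    (m ℓ : ℕ) (hℓm : ℓ ≤ m)
    (W : Submodule ℂ H) (hWclosed : IsClosed (W : Set H))
    (a : Fin m → H) (ha : ∀ j, a j ∈ W)
    (G : Matrix (Fin m) (Fin m) ℂ) (hG : ∀ k l, G k l = ⟪a k, a l⟫_ℂ)
    (lam : Fin m → ℝ) (hdec : Antitone lam) (hnonneg : ∀ s, 0 ≤ lam s)
    (y : Fin m → EuclideanSpace ℂ (Fin m)) (hy : Orthonormal ℂ y)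
    (heig : ∀ s, G.conjTranspose *ᵥ (y s) = (lam s : ℂ) • (y s))
    (q : Fin m → H)
    (hq : ∀ s, q s = if lam s = 0 then 0
        else ((Real.sqrt (lam s))⁻¹ : ℝ) • ∑ k, y s k • a k) :
    (∀ S : Submodule ℂ H, Module.rank ℂ S ≤ (ℓ : Cardinal) →
        ∑ s ∈ Finset.univ.filter (fun s : Fin m => ℓ ≤ (s : ℕ)), lam s
          ≤ ∑ j, (Metric.infDist (a j) (S : Set H)) ^ 2) ∧
    ∑ j, (Metric.infDist (a j)
        ((Submodule.span ℂ (Set.range fun s : Fin ℓ => q (Fin.castLE hℓm s)) : Submodule ℂ H)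
          : Set H)) ^ 2
      = ∑ s ∈ Finset.univ.filter (fun s : Fin m => ℓ ≤ (s : ℕ)), lam s :=
  stmt6_general m ℓ hℓm a G hG lam hdec y hy heig q hq
end

section
/- With the notation of the optimal low-dimensional approximation in a Hilbert space: the vectors q_s = λ_s^{−1/2} Σ_k y_s(k) a_k, for s = 1,…,ℓ with λ_s ≠ 0 (and q_s = 0 if λ_s = 0), form a Parseval frame for the subspace S* = span{q_1,…,q_ℓ}. -/
open InnerProductSpace Matrix
open scoped ComplexConjugate

/-!
The Gramian identity `⟪∑ x i • a i, ∑ y i • a i⟫ = star x ⬝ᵥ G *ᵥ y` turns orthonormal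
eigenvectors of `G` into pairwise orthogonal vectors `∑ y_s k • a k` of norm `√λ_s`. After
normalisation every `q_s` is either a unit vector or zero, and such a family is a Parseval frame
for its span: writing `f = ∑ c_s q_s`, both `‖f‖²` and `∑ |⟪f, q_s⟫|²` equal `∑ |c_s|² ‖q_s‖²`.
-/

section
variable {𝕜 E : Type*} [RCLike 𝕜] [NormedAddCommGroup E] [InnerProductSpace 𝕜 E]

theorem inner_sum_smul_eq_of_conjTranspose_gram_mulVec_eq {n : Type*} [Fintype n] {v : n → E}
    {x : EuclideanSpace 𝕜 n} {μ : ℝ} (hx : (gram 𝕜 v)ᴴ *ᵥ x = (μ : 𝕜) • x)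
    (y : EuclideanSpace 𝕜 n) :
    ⟪∑ i, x i • v i, ∑ i, y i • v i⟫_𝕜 = μ * ⟪x, y⟫_𝕜 := by
  have hstar : star x.ofLp ᵥ* gram 𝕜 v = (μ : 𝕜) • star x.ofLp := by
    rw [← conjTranspose_conjTranspose (gram 𝕜 v), ← star_mulVec, hx, star_smul, RCLike.star_def,
      RCLike.conj_ofReal]
  rw [← star_dotProduct_gram_mulVec, dotProduct_mulVec, hstar, smul_dotProduct,
    EuclideanSpace.inner_eq_star_dotProduct, dotProduct_comm, smul_eq_mul]

theorem norm_sum_smul_sq_of_conjTranspose_gram_mulVec_eq {n : Type*} [Fintype n] {v : n → E}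
    {x : EuclideanSpace 𝕜 n} {μ : ℝ} (hx : (gram 𝕜 v)ᴴ *ᵥ x = (μ : 𝕜) • x) :
    ‖∑ i, x i • v i‖ ^ 2 = μ * ‖x‖ ^ 2 := by
  apply RCLike.ofReal_injective (K := 𝕜)
  rw [RCLike.ofReal_pow, ← inner_self_eq_norm_sq_to_K,
    inner_sum_smul_eq_of_conjTranspose_gram_mulVec_eq hx, inner_self_eq_norm_sq_to_K]
  push_cast
  rfl

theorem sum_norm_inner_sq_eq_norm_sq_of_mem_span {ι : Type*} [Fintype ι] {v : ι → E}
    (horth : Pairwise fun s t ↦ ⟪v s, v t⟫_𝕜 = 0) (hnorm : ∀ s, v s ≠ 0 → ‖v s‖ = 1)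
    {f : E} (hf : f ∈ Submodule.span 𝕜 (Set.range v)) :
    ∑ s, ‖⟪f, v s⟫_𝕜‖ ^ 2 = ‖f‖ ^ 2 := by
  obtain ⟨c, rfl⟩ := (Submodule.mem_span_range_iff_exists_fun 𝕜).mp hf
  have hcoeff (t : ι) : ⟪∑ s, c s • v s, v t⟫_𝕜 = conj (c t) * (‖v t‖ ^ 2 : ℝ) := by
    rw [sum_inner, Finset.sum_eq_single t (fun s _ hst ↦ by rw [inner_smul_left, horth hst, mul_zero])
      (by simp), inner_smul_left, inner_self_eq_norm_sq_to_K, RCLike.ofReal_pow]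
  have hidem (t : ι) : ‖v t‖ ^ 4 = ‖v t‖ ^ 2 := by
    by_cases h : v t = 0
    · simp [h]
    · simp [hnorm t h]
  have hnorm_sq : ‖∑ s, c s • v s‖ ^ 2 = ∑ t, ‖c t‖ ^ 2 * ‖v t‖ ^ 2 := by
    apply RCLike.ofReal_injective (K := 𝕜)
    rw [RCLike.ofReal_pow, ← inner_self_eq_norm_sq_to_K, inner_sum]
    push_cast
    refine Finset.sum_congr rfl fun t _ ↦ ?_
    rw [inner_smul_right, hcoeff, ← mul_assoc, RCLike.mul_conj, RCLike.ofReal_pow]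
  rw [hnorm_sq]
  refine Finset.sum_congr rfl fun t _ ↦ ?_
  rw [hcoeff, norm_mul, RCLike.norm_conj, RCLike.norm_ofReal, abs_of_nonneg (by positivity),
    mul_pow, ← pow_mul, hidem]
end

theorem stmt7_general {H : Type*} [NormedAddCommGroup H] [InnerProductSpace ℂ H]
    (m ℓ : ℕ) (hℓm : ℓ ≤ m)
    (a : Fin m → H)
    (G : Matrix (Fin m) (Fin m) ℂ) (hG : ∀ k l, G k l = ⟪a k, a l⟫_ℂ)
    (lam : Fin m → ℝ)
    (y : Fin m → EuclideanSpace ℂ (Fin m)) (hy : Orthonormal ℂ y)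
    (heig : ∀ s, G.conjTranspose *ᵥ (y s) = (lam s : ℂ) • (y s))
    (q : Fin ℓ → H)
    (hq : ∀ s : Fin ℓ, q s = if lam (Fin.castLE hℓm s) = 0 then 0
        else ((Real.sqrt (lam (Fin.castLE hℓm s)))⁻¹ : ℝ)
          • ∑ k, y (Fin.castLE hℓm s) k • a k) :
    ∀ f ∈ Submodule.span ℂ (Set.range q),
      ∑ s : Fin ℓ, ‖⟪f, q s⟫_ℂ‖ ^ 2 = ‖f‖ ^ 2 := by
  obtain rfl : G = gram ℂ a := Matrix.ext hG
  intro f hf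
  refine sum_norm_inner_sq_eq_norm_sq_of_mem_span (fun s t hst ↦ ?_) (fun s hs ↦ ?_) hf
  · have h := inner_sum_smul_eq_of_conjTranspose_gram_mulVec_eq (heig (Fin.castLE hℓm s))
      (y (Fin.castLE hℓm t))
    rw [hy.inner_eq_zero ((Fin.castLE_injective hℓm).ne hst), mul_zero] at h
    show ⟪q s, q t⟫_ℂ = 0
    rw [hq s, hq t]
    split_ifs <;> simp only [inner_zero_left, inner_zero_right, inner_smul_left_eq_smul,
      inner_smul_right_eq_smul, h, smul_zero]
  · rw [hq s] at hs ⊢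
    split_ifs at hs ⊢ with h0
    · exact absurd rfl hs
    have hnorm := norm_sum_smul_sq_of_conjTranspose_gram_mulVec_eq (heig (Fin.castLE hℓm s))
    rw [hy.1, one_pow, mul_one] at hnorm
    rw [← hnorm, Real.sqrt_sq (norm_nonneg _), norm_smul, norm_inv, norm_norm]
    refine inv_mul_cancel₀ fun h ↦ h0 ?_
    rw [← hnorm, h, sq, zero_mul]

/-- with `G` the Gramian of `a_1,…,a_m`, eigenvalues `λ_1 ≥ ⋯ ≥ λ_m ≥ 0`
and orthonormal left-eigenvector system `y_1,…,y_m` (`∑_k ȳ_s(k) G_{kl} = λ_s ȳ_s(l)`,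
i.e. `Gᴴ y_s = λ_s y_s`), the vectors `q_s = λ_s^{-1/2} ∑_k y_s(k) a_k` for `s = 1,…,ℓ`
(with `q_s = 0` when `λ_s = 0`) form a Parseval frame for `S* = span{q_1,…,q_ℓ}`:
`∑_s |⟨f, q_s⟩|² = ‖f‖²` for every `f ∈ S*`. -/
theorem stmt7 {H : Type*} [NormedAddCommGroup H] [InnerProductSpace ℂ H] [CompleteSpace H]
    (m ℓ : ℕ) (hℓm : ℓ ≤ m)
    (a : Fin m → H)
    (G : Matrix (Fin m) (Fin m) ℂ) (hG : ∀ k l, G k l = ⟪a k, a l⟫_ℂ)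
    (lam : Fin m → ℝ) (hdec : Antitone lam) (hnonneg : ∀ s, 0 ≤ lam s)
    (y : Fin m → EuclideanSpace ℂ (Fin m)) (hy : Orthonormal ℂ y)
    (heig : ∀ s, G.conjTranspose *ᵥ (y s) = (lam s : ℂ) • (y s))
    (q : Fin ℓ → H)
    (hq : ∀ s : Fin ℓ, q s = if lam (Fin.castLE hℓm s) = 0 then 0
        else ((Real.sqrt (lam (Fin.castLE hℓm s)))⁻¹ : ℝ)
          • ∑ k, y (Fin.castLE hℓm s) k • a k) :
    ∀ f ∈ Submodule.span ℂ (Set.range q),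
      ∑ s : Fin ℓ, ‖⟪f, q s⟫_ℂ‖ ^ 2 = ‖f‖ ^ 2 :=
  stmt7_general m ℓ hℓm a G hG lam y hy heig q hq
end

section
/- Let Λ be a finite multiset of nonnegative reals with |Λ| = mκ, and for each function α: N → {0,…,ℓ} over a finite set N of size κ with Σ_σ α(σ) ≤ ℓ, consider the error E(α) = Σ_{σ∈N} (sum of the m − α(σ) smallest eigenvalues λ_{α(σ)+1}^σ,…,λ_m^σ of the σ-th group). Then min_α E(α) = Σ_{λ ∈ Λ∖Λ_ℓ} λ, where Λ_ℓ is the sub-multiset of the ℓ largest elements of Λ and the groups are (λ_1^σ ≥ ⋯ ≥ λ_m^σ)_{σ∈N} whose union is Λ. -/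
open Finset

private lemma list_sum_ones (l : List ℕ) (h : ∀ x ∈ l, x = 1) : l.sum = l.length := by
  induction l with
  | nil => simp
  | cons a t ih =>
    simp only [List.sum_cons, List.length_cons, h a (by simp)]
    rw [ih (fun x hx => h x (by simp [hx]))]
    omega

private lemma sum_map_sub (l : List ℝ) (t : ℝ) :
    (l.map (fun x => x - t)).sum = l.sum - l.length * t := by
  induction l with
  | nil => simp
  | cons a tl ih => simp [ih]; ring

private lemma card_flt (m a : ℕ) (ha : a ≤ m) :
    (Finset.univ.filter (fun s : Fin m => (s : ℕ) < a)).card = a := by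
  rw [Finset.card_filter, Fin.sum_univ_eq_sum_range (fun i => if i < a then 1 else 0),
    ← Finset.sum_filter]
  have : (Finset.range m).filter (fun i => i < a) = Finset.range a := by
    ext i; simp; omega
  rw [this]; simp

private lemma card_fab (m a b : ℕ) (hb : b ≤ m) :
    (Finset.univ.filter (fun s : Fin m => a ≤ (s : ℕ) ∧ (s : ℕ) < b)).card = b - a := by
  rw [Finset.card_filter, Fin.sum_univ_eq_sum_range (fun i => if a ≤ i ∧ i < b then 1 else 0),
    ← Finset.sum_filter]
  have : (Finset.range m).filter (fun i => a ≤ i ∧ i < b) = Finset.Ico a b := by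
    ext i; simp; omega
  rw [this]; simp

private lemma mem_lower_filter {m : ℕ} (P : Fin m → Prop) [DecidablePred P]
    (hP : ∀ i j : Fin m, i ≤ j → P j → P i) (s : Fin m) :
    P s ↔ (s : ℕ) < (Finset.univ.filter P).card := by
  constructor
  · intro hs
    have hsub : Finset.Iic s ⊆ Finset.univ.filter P := by
      intro i hi
      simp only [Finset.mem_Iic] at hi
      exact Finset.mem_filter.mpr ⟨Finset.mem_univ _, hP i s hi hs⟩
    have := Finset.card_le_card hsub
    rw [Fin.card_Iic] at this
    omega
  · intro hc
    by_contra hns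
    have hsub : Finset.univ.filter P ⊆ Finset.Iio s := by
      intro i hi
      rw [Finset.mem_filter] at hi
      rw [Finset.mem_Iio]
      by_contra hge
      exact hns (hP s i (le_of_not_gt (fun hlt => hge (Fin.lt_iff_val_lt_val.mpr
        (Fin.lt_iff_val_lt_val.mp hlt)))) hi.2)
    have := Finset.card_le_card hsub
    rw [Fin.card_Iio] at this
    omega

private lemma exists_le_sum {ι : Type*} [Fintype ι] (f : ι → ℕ) (n : ℕ)
    (h : n ≤ ∑ i, f i) : ∃ g : ι → ℕ, (∀ i, g i ≤ f i) ∧ ∑ i, g i = n := by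
  classical
  induction n with
  | zero => exact ⟨fun _ => 0, fun _ => Nat.zero_le _, by simp⟩
  | succ n ih =>
    obtain ⟨g, hg, hsum⟩ := ih (Nat.le_of_succ_le h)
    have hex : ∃ i, g i < f i := by
      by_contra hc
      push_neg at hc
      have : ∑ i, f i ≤ ∑ i, g i := Finset.sum_le_sum fun i _ => hc i
      omega
    obtain ⟨i, hi⟩ := hex
    refine ⟨Function.update g i (g i + 1), ?_, ?_⟩
    · intro j
      rcases eq_or_ne j i with rfl | hne
      · simpa using hi
      · simpa [Function.update_of_ne hne] using hg j
    · rw [Finset.sum_update_of_mem (Finset.mem_univ i)]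
      have h2 : ∑ x ∈ Finset.univ, g x = g i + ∑ x ∈ Finset.univ \ {i}, g x := by
        rw [← Finset.sum_update_of_mem (Finset.mem_univ i) g (g i)]
        congr 1
        ext j
        rcases eq_or_ne j i with rfl | hne
        · simp
        · simp [Function.update_of_ne hne]
      omega

private lemma sum_map_of_bind {N : Type*} [Fintype N] {m : ℕ} (lam : N → Fin m → ℝ)
    (L : List ℝ)
    (hL : (↑L : Multiset ℝ)
        = Finset.univ.val.bind fun σ : N => Multiset.map (lam σ) Finset.univ.val)
    {M : Type*} [AddCommMonoid M] (g : ℝ → M) :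
    (L.map g).sum = ∑ σ : N, ∑ s : Fin m, g (lam σ s) := by
  have h1 : (L.map g).sum = ((↑L : Multiset ℝ).map g).sum := by
    simp
  rw [h1, hL, Multiset.map_bind, Multiset.sum_bind]
  rw [Finset.sum_eq_multiset_sum]
  congr 1
  apply Multiset.map_congr rfl
  intro σ _
  rw [Multiset.map_map, Finset.sum_eq_multiset_sum]
  rfl

/-- given finitely many decreasing groups `λ_1^σ ≥ ⋯ ≥ λ_m^σ ≥ 0`
(`σ ∈ N`, `|N| = κ`) whose union is the multiset `Λ`, the minimum over all
`α : N → {0,…,m}` with `∑_σ α(σ) ≤ ℓ` of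
`E(α) = ∑_σ (λ_{α(σ)+1}^σ + ⋯ + λ_m^σ)` equals the sum of the elements of `Λ` not
among the `ℓ` largest (`L` is `Λ` sorted decreasingly, so this sum is `∑ (L.drop ℓ)`). -/
theorem stmt14 (m ℓ : ℕ) {N : Type*} [Fintype N]
    (lam : N → Fin m → ℝ)
    (hdec : ∀ σ, Antitone (lam σ))
    (hnonneg : ∀ σ s, 0 ≤ lam σ s)
    (L : List ℝ) (hsort : L.Pairwise (· ≥ ·))
    (hL : (↑L : Multiset ℝ)
        = Finset.univ.val.bind fun σ : N =>
            Multiset.map (lam σ) Finset.univ.val) :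
    IsLeast
      {x : ℝ | ∃ α : N → ℕ, (∀ σ, α σ ≤ m) ∧ (∑ σ, α σ) ≤ ℓ ∧
          x = ∑ σ, ∑ s ∈ Finset.univ.filter (fun s : Fin m => α σ ≤ (s : ℕ)), lam σ s}
      ((L.drop ℓ).sum) := by
  classical
  -- total sum
  have hLlen : L.length = ∑ _σ : N, m := by
    have := congrArg (fun s => Multiset.card s) hL
    simpa [Multiset.card_bind, Finset.sum_eq_multiset_sum, Multiset.map_map,
      Function.comp] using this
  have hLsum : L.sum = ∑ σ : N, ∑ s : Fin m, lam σ s := by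
    simpa using sum_map_of_bind lam L hL id
  -- splitting E(α)
  have hsplit : ∀ (α : N → ℕ),
      (∑ σ, ∑ s ∈ Finset.univ.filter (fun s : Fin m => α σ ≤ (s : ℕ)), lam σ s)
      = L.sum - ∑ σ, ∑ s ∈ Finset.univ.filter (fun s : Fin m => (s : ℕ) < α σ), lam σ s := by
    intro α
    rw [hLsum, ← Finset.sum_sub_distrib]
    apply Finset.sum_congr rfl
    intro σ _
    have h := Finset.sum_filter_add_sum_filter_not Finset.univ
      (fun s : Fin m => (s : ℕ) < α σ) (lam σ)
    have hfe : Finset.univ.filter (fun s : Fin m => ¬ (s : ℕ) < α σ)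
        = Finset.univ.filter (fun s : Fin m => α σ ≤ (s : ℕ)) := by
      apply Finset.filter_congr
      intro s _
      simp [not_lt]
    rw [hfe] at h
    linarith
  by_cases hcase : L.length ≤ ℓ
  · -- trivial case : drop everything
    have hdrop : L.drop ℓ = [] := List.drop_eq_nil_of_le hcase
    rw [hdrop]
    constructor
    · refine ⟨fun _ => m, fun _ => le_rfl, ?_, ?_⟩
      · simpa [← hLlen] using hcase
      · simp only [List.sum_nil]
        symm
        apply Finset.sum_eq_zero
        intro σ _
        apply Finset.sum_eq_zero
        intro s hs
        rw [Finset.mem_filter] at hs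
        exact absurd hs.2 (by omega)
    · rintro x ⟨α, hα, hαs, rfl⟩
      simp only [List.sum_nil]
      apply Finset.sum_nonneg
      intro σ _
      exact Finset.sum_nonneg fun s _ => hnonneg σ s
  · push_neg at hcase
    set t : ℝ := L[ℓ]'hcase with ht
    have hpw : ∀ (i j : ℕ) (hi : i < L.length) (hj : j < L.length), i < j → L[i] ≥ L[j] :=
      List.pairwise_iff_getElem.mp hsort
    have htake : ∀ x ∈ L.take ℓ, t ≤ x := by
      intro x hx
      obtain ⟨k, hk, rfl⟩ := List.mem_iff_getElem.mp hx
      have hk' : k < ℓ := by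
        have := hk
        rw [List.length_take] at this
        omega
      rw [List.getElem_take]
      exact hpw k ℓ (by omega) hcase hk'
    have hdrople : ∀ x ∈ L.drop ℓ, x ≤ t := by
      intro x hx
      obtain ⟨k, hk, rfl⟩ := List.mem_iff_getElem.mp hx
      rw [List.length_drop] at hk
      rw [List.getElem_drop]
      rcases Nat.eq_zero_or_pos k with rfl | hk0
      · simp [ht]
      · exact hpw ℓ (ℓ + k) hcase (by omega) (by omega)
    have htlen : (L.take ℓ).length = ℓ := by
      rw [List.length_take]; omega
    have ht0 : 0 ≤ t := by
      have hmem : t ∈ L := List.getElem_mem hcase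
      have : t ∈ (↑L : Multiset ℝ) := by simpa using hmem
      rw [hL] at this
      simp only [Multiset.mem_bind, Multiset.mem_map] at this
      obtain ⟨σ, _, s, _, hst⟩ := this
      rw [← hst]
      exact hnonneg σ s
    have hLts : L.sum = (L.take ℓ).sum + (L.drop ℓ).sum := by
      conv_lhs => rw [← List.take_append_drop ℓ L]
      rw [List.sum_append]
    -- key identity for the positive-part sums
    have hF2 : (L.map (fun x => max (x - t) 0)).sum = (L.take ℓ).sum - ℓ * t := by
      conv_lhs => rw [← List.take_append_drop ℓ L]
      rw [List.map_append, List.sum_append]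
      have hd0 : ((L.drop ℓ).map (fun x => max (x - t) 0)).sum = 0 := by
        apply List.sum_eq_zero
        intro y hy
        rw [List.mem_map] at hy
        obtain ⟨x, hx, rfl⟩ := hy
        have := hdrople x hx
        simp [max_eq_right, sub_nonpos.mpr this]
      have hte : (L.take ℓ).map (fun x => max (x - t) 0) = (L.take ℓ).map (fun x => x - t) := by
        apply List.map_congr_left
        intro x hx
        exact max_eq_left (sub_nonneg.mpr (htake x hx))
      rw [hd0, hte, sum_map_sub, htlen, add_zero]
    have hmaxsum : (L.map (fun x => max (x - t) 0)).sum
        = ∑ σ : N, ∑ s : Fin m, max (lam σ s - t) 0 :=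
      sum_map_of_bind lam L hL _
    constructor
    · -- membership: construct the optimal α
      set p : N → ℕ := fun σ => (Finset.univ.filter (fun s : Fin m => t < lam σ s)).card with hpdef
      set q : N → ℕ := fun σ => (Finset.univ.filter (fun s : Fin m => lam σ s = t)).card with hqdef
      have hlowlt : ∀ σ (s : Fin m), t < lam σ s ↔ (s : ℕ) < p σ := fun σ s =>
        mem_lower_filter _ (fun i j hij hj => lt_of_lt_of_le hj (hdec σ hij)) s
      have hpq_card : ∀ σ, (Finset.univ.filter (fun s : Fin m => t ≤ lam σ s)).card
          = p σ + q σ := by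
        intro σ
        have : Finset.univ.filter (fun s : Fin m => t ≤ lam σ s)
            = Finset.univ.filter (fun s : Fin m => t < lam σ s)
              ∪ Finset.univ.filter (fun s : Fin m => lam σ s = t) := by
          rw [← Finset.filter_or]
          apply Finset.filter_congr
          intro s _
          constructor
          · intro h; rcases lt_or_eq_of_le h with h | h
            · exact Or.inl h
            · exact Or.inr h.symm
          · rintro (h | h)
            · exact le_of_lt h
            · exact le_of_eq h.symm
        rw [this, Finset.card_union_of_disjoint]
        rw [Finset.disjoint_filter]
        intro s _ hs
        exact ne_of_gt hs
      have hlowle : ∀ σ (s : Fin m), t ≤ lam σ s ↔ (s : ℕ) < p σ + q σ := by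
        intro σ s
        rw [← hpq_card σ]
        exact mem_lower_filter _ (fun i j hij hj => le_trans hj (hdec σ hij)) s
      have hpqm : ∀ σ, p σ + q σ ≤ m := by
        intro σ
        rw [← hpq_card σ]
        calc (Finset.univ.filter (fun s : Fin m => t ≤ lam σ s)).card
            ≤ (Finset.univ : Finset (Fin m)).card := Finset.card_filter_le _ _
          _ = m := by simp
      -- counting via indicator sums
      have hcnt_lt : ((L.map (fun x => if t < x then 1 else 0)).sum : ℕ) = ∑ σ, p σ := by
        rw [sum_map_of_bind lam L hL (fun x => if t < x then (1:ℕ) else 0)]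
        apply Finset.sum_congr rfl
        intro σ _
        simp only [hpdef]
        rw [Finset.card_filter]
      have hcnt_le : ((L.map (fun x => if t ≤ x then 1 else 0)).sum : ℕ) = ∑ σ, (p σ + q σ) := by
        rw [sum_map_of_bind lam L hL (fun x => if t ≤ x then (1:ℕ) else 0)]
        apply Finset.sum_congr rfl
        intro σ _
        rw [← hpq_card σ, Finset.card_filter]
      have hple : ∑ σ, p σ ≤ ℓ := by
        rw [← hcnt_lt]
        conv_lhs => rw [← List.take_append_drop ℓ L]
        rw [List.map_append, List.sum_append]
        have hd0 : ((L.drop ℓ).map (fun x => if t < x then (1:ℕ) else 0)).sum = 0 := by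
          apply List.sum_eq_zero
          intro y hy
          rw [List.mem_map] at hy
          obtain ⟨x, hx, rfl⟩ := hy
          simp [not_lt.mpr (hdrople x hx)]
        rw [hd0, add_zero]
        calc ((L.take ℓ).map (fun x => if t < x then (1:ℕ) else 0)).sum
            ≤ ((L.take ℓ).map (fun x => if t < x then (1:ℕ) else 0)).length • 1 := by
              apply List.sum_le_card_nsmul
              intro x hx
              rw [List.mem_map] at hx
              obtain ⟨y, _, rfl⟩ := hx
              split <;> omega
          _ = ℓ := by rw [List.length_map, htlen, smul_eq_mul, mul_one]
      have hqge : ℓ ≤ ∑ σ, (p σ + q σ) := by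
        rw [← hcnt_le]
        conv_rhs => rw [← List.take_append_drop ℓ L]
        rw [List.map_append, List.sum_append]
        have h1 : ((L.take ℓ).map (fun x => if t ≤ x then (1:ℕ) else 0)).sum = ℓ := by
          rw [list_sum_ones]
          · rw [List.length_map, htlen]
          · intro x hx
            rw [List.mem_map] at hx
            obtain ⟨y, hy, rfl⟩ := hx
            simp [htake y hy]
        omega
      obtain ⟨c, hc, hcsum⟩ := exists_le_sum q (ℓ - ∑ σ, p σ)
        (by
          have : ∑ σ, (p σ + q σ) = ∑ σ, p σ + ∑ σ, q σ := Finset.sum_add_distrib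
          omega)
      refine ⟨fun σ => p σ + c σ, fun σ => ?_, ?_, ?_⟩
      · show p σ + c σ ≤ m
        have := hc σ
        have := hpqm σ
        omega
      · show ∑ σ, (p σ + c σ) ≤ ℓ
        rw [Finset.sum_add_distrib, hcsum]
        omega
      · show (L.drop ℓ).sum = ∑ σ, ∑ s ∈ Finset.univ.filter
          (fun s : Fin m => p σ + c σ ≤ (s : ℕ)), lam σ s
        rw [hsplit, hLts]
        have hkey : ∀ σ, (∑ s ∈ Finset.univ.filter
              (fun s : Fin m => (s : ℕ) < p σ + c σ), lam σ s)
            = (∑ s : Fin m, max (lam σ s - t) 0) + (p σ + c σ) * t := by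
          intro σ
          have hpm : p σ ≤ m := by have := hpqm σ; omega
          have ham : p σ + c σ ≤ m := by have := hc σ; have := hpqm σ; omega
          -- RHS computation
          have hrhs : (∑ s : Fin m, max (lam σ s - t) 0)
              = (∑ s ∈ Finset.univ.filter (fun s : Fin m => (s : ℕ) < p σ), lam σ s)
                - p σ * t := by
            rw [← Finset.sum_filter_add_sum_filter_not Finset.univ
              (fun s : Fin m => (s : ℕ) < p σ) (fun s => max (lam σ s - t) 0)]
            have h1 : ∑ s ∈ Finset.univ.filter (fun s : Fin m => ¬ (s : ℕ) < p σ),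
                max (lam σ s - t) 0 = 0 := by
              apply Finset.sum_eq_zero
              intro s hs
              rw [Finset.mem_filter] at hs
              have : ¬ t < lam σ s := by rw [hlowlt]; exact hs.2
              simp [max_eq_right, sub_nonpos.mpr (not_lt.mp this)]
            have h2 : ∑ s ∈ Finset.univ.filter (fun s : Fin m => (s : ℕ) < p σ),
                max (lam σ s - t) 0
                = ∑ s ∈ Finset.univ.filter (fun s : Fin m => (s : ℕ) < p σ),
                    (lam σ s - t) := by
              apply Finset.sum_congr rfl
              intro s hs
              rw [Finset.mem_filter] at hs
              have : t < lam σ s := (hlowlt σ s).mpr hs.2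
              exact max_eq_left (sub_nonneg.mpr (le_of_lt this))
            rw [h1, h2, add_zero, Finset.sum_sub_distrib, Finset.sum_const,
              card_flt m (p σ) hpm, nsmul_eq_mul]
          -- LHS computation
          have hlhs : (∑ s ∈ Finset.univ.filter
                (fun s : Fin m => (s : ℕ) < p σ + c σ), lam σ s)
              = (∑ s ∈ Finset.univ.filter (fun s : Fin m => (s : ℕ) < p σ), lam σ s)
                + c σ * t := by
            rw [← Finset.sum_filter_add_sum_filter_not
              (Finset.univ.filter (fun s : Fin m => (s : ℕ) < p σ + c σ))
              (fun s : Fin m => (s : ℕ) < p σ) (lam σ)]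
            congr 1
            · congr 1
              rw [Finset.filter_filter]
              apply Finset.filter_congr
              intro s _
              constructor
              · exact fun h => h.2
              · exact fun h => ⟨by omega, h⟩
            · have hset : (Finset.univ.filter (fun s : Fin m => (s : ℕ) < p σ + c σ)).filter
                  (fun s : Fin m => ¬ (s : ℕ) < p σ)
                  = Finset.univ.filter (fun s : Fin m => p σ ≤ (s : ℕ) ∧ (s : ℕ) < p σ + c σ)
                  := by
                rw [Finset.filter_filter]
                apply Finset.filter_congr
                intro s _
                simp only [not_lt]
                tauto
              rw [hset]
              have hval : ∀ s ∈ Finset.univ.filter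
                  (fun s : Fin m => p σ ≤ (s : ℕ) ∧ (s : ℕ) < p σ + c σ), lam σ s = t := by
                intro s hs
                rw [Finset.mem_filter] at hs
                have h1 : ¬ t < lam σ s := by rw [hlowlt]; omega
                have h2 : t ≤ lam σ s := by
                  rw [hlowle]
                  have := hc σ
                  omega
                linarith [not_lt.mp h1]
              rw [Finset.sum_congr rfl hval, Finset.sum_const,
                card_fab m (p σ) (p σ + c σ) ham, nsmul_eq_mul]
              congr 1
              push_cast [Nat.add_sub_cancel_left]
              ring
          rw [hlhs, hrhs]
          ring
        rw [Finset.sum_congr rfl (fun σ _ => hkey σ), Finset.sum_add_distrib,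
          ← hmaxsum, hF2]
        have hn : ∑ σ, (p σ + c σ) = ℓ := by
          rw [Finset.sum_add_distrib, hcsum]
          omega
        have hcc : ∑ σ : N, ((p σ : ℝ) + (c σ : ℝ)) * t = (ℓ : ℝ) * t := by
          rw [← Finset.sum_mul, ← hn]
          norm_num
        rw [hcc]
        ring
    · -- lower bound
      rintro x ⟨α, hα, hαs, rfl⟩
      rw [hsplit, hLts]
      have hbound : (∑ σ, ∑ s ∈ Finset.univ.filter
            (fun s : Fin m => (s : ℕ) < α σ), lam σ s)
          ≤ (L.take ℓ).sum := by
        have hper : ∀ σ, (∑ s ∈ Finset.univ.filter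
              (fun s : Fin m => (s : ℕ) < α σ), lam σ s)
            ≤ (∑ s : Fin m, max (lam σ s - t) 0) + α σ * t := by
          intro σ
          calc (∑ s ∈ Finset.univ.filter (fun s : Fin m => (s : ℕ) < α σ), lam σ s)
              ≤ ∑ s ∈ Finset.univ.filter (fun s : Fin m => (s : ℕ) < α σ),
                  (max (lam σ s - t) 0 + t) := by
                apply Finset.sum_le_sum
                intro s _
                have := le_max_left (lam σ s - t) 0
                linarith
            _ = (∑ s ∈ Finset.univ.filter (fun s : Fin m => (s : ℕ) < α σ),
                  max (lam σ s - t) 0) + α σ * t := by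
                rw [Finset.sum_add_distrib, Finset.sum_const,
                  card_flt m (α σ) (hα σ), nsmul_eq_mul]
            _ ≤ (∑ s : Fin m, max (lam σ s - t) 0) + α σ * t := by
                have := Finset.sum_le_sum_of_subset_of_nonneg
                  (Finset.filter_subset (fun s : Fin m => (s : ℕ) < α σ) Finset.univ)
                  (fun s _ _ => le_max_right (lam σ s - t) 0)
                linarith
        calc (∑ σ, ∑ s ∈ Finset.univ.filter (fun s : Fin m => (s : ℕ) < α σ), lam σ s)
            ≤ ∑ σ, ((∑ s : Fin m, max (lam σ s - t) 0) + α σ * t) :=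
              Finset.sum_le_sum fun σ _ => hper σ
          _ = (∑ σ : N, ∑ s : Fin m, max (lam σ s - t) 0) + (∑ σ, (α σ : ℝ)) * t := by
              rw [Finset.sum_add_distrib, Finset.sum_mul]
          _ ≤ (∑ σ : N, ∑ s : Fin m, max (lam σ s - t) 0) + ℓ * t := by
              gcongr
              rw [← Nat.cast_sum]
              exact_mod_cast hαs
          _ = (L.take ℓ).sum := by rw [← hmaxsum, hF2]; ring
      linarith
end
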